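/- Let Δ be a PR complex over a field K. Then for every face σ of Δ, there is at most one integer i with H̃_i(link_Δ σ; K) ≠ 0. -/

import Mathlib

open Finset

namespace SRPure

variable {V : Type*}

/-- A downward closed set of finite sets: the faces of an abstract simplicial complex. -/
def IsDown (Δ : Set (Finset V)) : Prop := ∀ s ∈ Δ, ∀ t ⊆ s, t ∈ Δ

/-- A facet is a maximal face. -/
def IsFacet (Δ : Set (Finset V)) (F : Finset V) : Prop :=
  F ∈ Δ ∧ ∀ G ∈ Δ, F ⊆ G → F = G

section Link

variable [DecidableEq V]

/-- The link of a face `σ`. -/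
def link (Δ : Set (Finset V)) (σ : Finset V) : Set (Finset V) :=
  {τ | Disjoint τ σ ∧ τ ∪ σ ∈ Δ}

theorem link_down {Δ : Set (Finset V)} (hΔ : IsDown Δ) (σ : Finset V) :
    IsDown (link Δ σ) := by
  rintro s ⟨hd, hu⟩ t hts
  exact ⟨hd.mono_left hts, hΔ _ hu _ (Finset.union_subset_union hts (Finset.Subset.refl σ))⟩

end Link

section Homology

variable (K : Type*) [Field K] [LinearOrder V]

/-- Simplicial chains spanned by the faces of cardinality `c`. -/
abbrev Chains (Δ : Set (Finset V)) (c : ℕ) : Type _ :=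
  {s : Finset V // s ∈ Δ ∧ s.card = c} →₀ K

/-- The boundary of a single face of cardinality `c+1`. -/
noncomputable def faceBdry {Δ : Set (Finset V)} (hΔ : IsDown Δ) (c : ℕ)
    (s : {s : Finset V // s ∈ Δ ∧ s.card = c + 1}) : Chains K Δ c :=
  ∑ v ∈ s.1.attach,
    ((-1 : K) ^ ((s.1.filter (fun w => w < v.1)).card)) •
      Finsupp.single
        ⟨s.1.erase v.1, hΔ _ s.2.1 _ (Finset.erase_subset _ _),
          by simp [Finset.card_erase_of_mem v.2, s.2.2]⟩ (1 : K)

/-- The simplicial boundary map. -/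
noncomputable def bdry {Δ : Set (Finset V)} (hΔ : IsDown Δ) (c : ℕ) :
    Chains K Δ (c + 1) →ₗ[K] Chains K Δ c :=
  Finsupp.lsum K fun s => LinearMap.toSpanSingleton K _ (faceBdry K hΔ c s)

/-- Reduced cycles in cardinality `c` (homological degree `c - 1`). -/
noncomputable def cycles {Δ : Set (Finset V)} (hΔ : IsDown Δ) :
    (c : ℕ) → Submodule K (Chains K Δ c)
  | 0 => ⊤
  | c + 1 => LinearMap.ker (bdry K hΔ c)

/-- `RH K hΔ c` is the reduced simplicial homology (with coefficients in `K`) of the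
complex in homological degree `c - 1`, indexed by the cardinality `c` of faces; so
`RH K hΔ 0` is `H̃₋₁` and `RH K hΔ (i+1)` is `H̃ᵢ`. -/
noncomputable abbrev RH {Δ : Set (Finset V)} (hΔ : IsDown Δ) (c : ℕ) :=
  @HasQuotient.Quotient (cycles K hΔ c) (Submodule K (cycles K hΔ c))
    (Submodule.hasQuotient (R := K) (M := cycles K hΔ c))
    (Submodule.comap (cycles K hΔ c).subtype (LinearMap.range (bdry K hΔ c)))

/-- A complex is PR (has a "pure resolution") over `K` if links of faces of different
sizes never have nontrivial reduced homology in the same degree. -/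
def IsPR {Δ : Set (Finset V)} (hΔ : IsDown Δ) : Prop :=
  ∀ σ ∈ Δ, ∀ τ ∈ Δ, ∀ c : ℕ,
    Nontrivial (RH K (link_down hΔ σ) c) →
    Nontrivial (RH K (link_down hΔ τ) c) → σ.card = τ.card

end Homology

end SRPure

/-!
Descending links: if every link of a nonempty face of a finite complex `Γ` is acyclic in some
degree, then `Γ` is acyclic one degree higher. This goes by induction on the vertices, splitting
`Γ` at a vertex `v` into the deletion `del Γ v` and the cone over `link Γ {v}`; the
Mayer–Vietoris argument for this splitting is carried out on chains, using the cone map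
`z ↦ v * z` and the contraction with `v`, which is its left inverse.

Iterating, a nontrivial `H̃_{i+k}` of `link σ` produces a face `τ ⊇ σ` with `|τ| ≥ |σ| + k`
whose link has nontrivial `H̃_i`. If `link σ` also has nontrivial `H̃_i`, the PR property
forces `|τ| = |σ|`, so `k = 0`.
-/

namespace SRPure

noncomputable section

variable {V : Type*}

section Sign

variable [LinearOrder V] (R : Type*) [CommRing R]

def vertexSign (v : V) (s : Finset V) : R := (-1) ^ (s.filter (fun w => w < v)).card

theorem vertexSign_mul_self (v : V) (s : Finset V) :
    vertexSign R v s * vertexSign R v s = 1 := by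
  rw [vertexSign, ← pow_add]
  exact Even.neg_one_pow ⟨_, rfl⟩

theorem vertexSign_erase_self (v : V) (s : Finset V) :
    vertexSign R v (s.erase v) = vertexSign R v s := by
  rw [vertexSign, vertexSign, Finset.filter_erase, Finset.erase_eq_of_notMem]
  simp

theorem vertexSign_insert_self (v : V) (s : Finset V) :
    vertexSign R v (insert v s) = vertexSign R v s := by
  rw [vertexSign, vertexSign, Finset.filter_insert, if_neg (lt_irrefl v)]

theorem vertexSign_mul_vertexSign_insert {v w : V} {u : Finset V} (hv : v ∉ u) (hw : w ∈ u) :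
    vertexSign R v u * vertexSign R w (insert v u) =
      -(vertexSign R w u * vertexSign R v (u.erase w)) := by
  have hvw : v ≠ w := fun h => hv (h ▸ hw)
  unfold vertexSign
  rw [Finset.filter_insert, Finset.filter_erase]
  rcases lt_or_gt_of_ne hvw with h | h
  · rw [if_pos h, Finset.card_insert_of_notMem (fun hc => hv (Finset.filter_subset _ _ hc)),
      Finset.erase_eq_of_notMem (fun hc => (Finset.mem_filter.mp hc).2.not_ge h.le), pow_succ]
    ring
  · have hwv : w ∈ u.filter (fun x => x < v) := Finset.mem_filter.mpr ⟨hw, h⟩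
    rw [if_neg (not_lt.mpr h.le), Finset.card_erase_of_mem hwv,
      ← Nat.sub_add_cancel (Finset.card_pos.mpr ⟨w, hwv⟩), Nat.add_sub_cancel, pow_succ]
    ring

end Sign

section Complexes

def del (Δ : Set (Finset V)) (v : V) : Set (Finset V) := {s ∈ Δ | v ∉ s}

theorem del_down {Δ : Set (Finset V)} (hΔ : IsDown Δ) (v : V) : IsDown (del Δ v) := by
  rintro s ⟨hs, hv⟩ t hts
  exact ⟨hΔ _ hs _ hts, fun hvt => hv (hts hvt)⟩

theorem del_subset (Δ : Set (Finset V)) (v : V) : del Δ v ⊆ Δ := fun _ hs => hs.1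

variable [DecidableEq V]

theorem mem_link_singleton {Δ : Set (Finset V)} {v : V} {s : Finset V} :
    s ∈ link Δ {v} ↔ v ∉ s ∧ insert v s ∈ Δ := by
  rw [link, Set.mem_ofPred_eq, Finset.disjoint_singleton_right, Finset.union_comm,
    ← Finset.insert_eq]

theorem link_subset_del {Δ : Set (Finset V)} (hΔ : IsDown Δ) (v : V) :
    link Δ {v} ⊆ del Δ v := fun _ hs =>
  ⟨hΔ _ (mem_link_singleton.mp hs).2 _ (Finset.subset_insert _ _), (mem_link_singleton.mp hs).1⟩

theorem link_singleton_subset {Δ : Set (Finset V)} (hΔ : IsDown Δ) (v : V) : link Δ {v} ⊆ Δ :=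
  (link_subset_del hΔ v).trans (del_subset Δ v)

theorem link_link (Δ : Set (Finset V)) {σ τ : Finset V} (hd : Disjoint τ σ) :
    link (link Δ σ) τ = link Δ (τ ∪ σ) := by
  ext s
  simp only [link, Set.mem_ofPred_eq, Finset.disjoint_union_left, Finset.disjoint_union_right,
    Finset.union_assoc]
  tauto

theorem link_del (Δ : Set (Finset V)) {v : V} {ρ : Finset V} (hv : v ∉ ρ) :
    link (del Δ v) ρ = del (link Δ ρ) v := by
  ext s
  simp only [link, del, Set.mem_ofPred_eq, Finset.mem_union]
  tauto

end Complexes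

section ChainMaps

variable (K : Type*) [Field K]

open Classical in
def faceChain (Δ : Set (Finset V)) (c : ℕ) (s : Finset V) : Chains K Δ c :=
  if h : s ∈ Δ ∧ s.card = c then Finsupp.single ⟨s, h⟩ 1 else 0

def incl {Δ₁ Δ₂ : Set (Finset V)} (h : Δ₁ ⊆ Δ₂) (n : ℕ) :
    Chains K Δ₁ n →ₗ[K] Chains K Δ₂ n :=
  Finsupp.lmapDomain K K fun s => ⟨s.1, h s.2.1, s.2.2⟩

def proj [DecidableEq V] (Δ : Set (Finset V)) (v : V) (n : ℕ) :
    Chains K Δ n →ₗ[K] Chains K (del Δ v) n :=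
  Finsupp.lsum K fun s => LinearMap.toSpanSingleton K _
    (if h : v ∈ s.1 then 0 else Finsupp.single ⟨s.1, ⟨s.2.1, h⟩, s.2.2⟩ 1)

variable {K}

theorem faceChain_of_mem {Δ : Set (Finset V)} {c : ℕ} {s : Finset V} (h : s ∈ Δ ∧ s.card = c) :
    faceChain K Δ c s = Finsupp.single ⟨s, h⟩ 1 :=
  dif_pos h

theorem faceChain_of_card_ne {Δ : Set (Finset V)} {c : ℕ} {s : Finset V} (h : s.card ≠ c) :
    faceChain K Δ c s = 0 :=
  dif_neg fun hs => h hs.2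

theorem linearMap_eq_of_faceChain {Δ : Set (Finset V)} {n : ℕ} {M : Type*} [AddCommGroup M]
    [Module K M] {f g : Chains K Δ n →ₗ[K] M}
    (h : ∀ s ∈ Δ, s.card = n → f (faceChain K Δ n s) = g (faceChain K Δ n s))
    (z : Chains K Δ n) : f z = g z := by
  refine LinearMap.congr_fun (Finsupp.lhom_ext fun s a => ?_) z
  rw [← mul_one a, ← smul_eq_mul, ← Finsupp.smul_single, map_smul, map_smul,
    ← faceChain_of_mem s.2, h s.1 s.2.1 s.2.2]

theorem incl_faceChain {Δ₁ Δ₂ : Set (Finset V)} (h : Δ₁ ⊆ Δ₂) (n : ℕ) {s : Finset V}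
    (hs : s ∈ Δ₁) : incl K h n (faceChain K Δ₁ n s) = faceChain K Δ₂ n s := by
  by_cases hc : s.card = n
  · rw [faceChain_of_mem ⟨hs, hc⟩, incl, Finsupp.lmapDomain_apply, Finsupp.mapDomain_single,
      faceChain_of_mem ⟨h hs, hc⟩]
  · rw [faceChain_of_card_ne hc, faceChain_of_card_ne hc, map_zero]

theorem incl_incl {Δ₁ Δ₂ Δ₃ : Set (Finset V)} (h₁ : Δ₁ ⊆ Δ₂) (h₂ : Δ₂ ⊆ Δ₃) (n : ℕ)
    (z : Chains K Δ₁ n) : incl K h₂ n (incl K h₁ n z) = incl K (h₁.trans h₂) n z :=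
  Finsupp.mapDomain_comp.symm

theorem incl_injective {Δ₁ Δ₂ : Set (Finset V)} (h : Δ₁ ⊆ Δ₂) (n : ℕ) :
    Function.Injective (incl K h n) :=
  Finsupp.mapDomain_injective fun _ _ hst => Subtype.ext (congrArg (fun t => t.1) hst :)

variable [DecidableEq V]

theorem proj_faceChain_of_mem (Δ : Set (Finset V)) {v : V} (n : ℕ) {s : Finset V}
    (hs : s ∈ Δ) (hc : s.card = n) (hv : v ∈ s) : proj K Δ v n (faceChain K Δ n s) = 0 := by
  rw [faceChain_of_mem ⟨hs, hc⟩, proj, Finsupp.lsum_single, LinearMap.toSpanSingleton_apply,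
    one_smul, dif_pos hv]

theorem proj_faceChain_of_notMem (Δ : Set (Finset V)) {v : V} (n : ℕ) {s : Finset V}
    (hs : s ∈ Δ) (hv : v ∉ s) : proj K Δ v n (faceChain K Δ n s) = faceChain K (del Δ v) n s := by
  by_cases hc : s.card = n
  · rw [faceChain_of_mem ⟨hs, hc⟩, proj, Finsupp.lsum_single, LinearMap.toSpanSingleton_apply,
      one_smul, dif_neg hv, faceChain_of_mem (Δ := del Δ v) ⟨⟨hs, hv⟩, hc⟩]
  · rw [faceChain_of_card_ne hc, faceChain_of_card_ne hc, map_zero]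

end ChainMaps

section Cone

variable [LinearOrder V]

section Maps

variable (K : Type*) [Field K]

def cone (Δ : Set (Finset V)) (v : V) (n : ℕ) :
    Chains K (link Δ {v}) n →ₗ[K] Chains K Δ (n + 1) :=
  Finsupp.lsum K fun u => LinearMap.toSpanSingleton K _
    (vertexSign K v u.1 • Finsupp.single
      ⟨insert v u.1, (mem_link_singleton.mp u.2.1).2,
        by rw [Finset.card_insert_of_notMem (mem_link_singleton.mp u.2.1).1, u.2.2]⟩ 1)

def contr (Δ : Set (Finset V)) (v : V) (n : ℕ) :
    Chains K Δ (n + 1) →ₗ[K] Chains K (link Δ {v}) n :=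
  Finsupp.lsum K fun s => LinearMap.toSpanSingleton K _
    (if h : v ∈ s.1 then
      vertexSign K v s.1 • Finsupp.single
        ⟨s.1.erase v, mem_link_singleton.mpr
            ⟨Finset.notMem_erase _ _, by rw [Finset.insert_erase h]; exact s.2.1⟩,
          by rw [Finset.card_erase_of_mem h, s.2.2]; rfl⟩ 1
     else 0)

end Maps

variable {K : Type*} [Field K]

theorem bdry_faceChain {Δ : Set (Finset V)} (hΔ : IsDown Δ) (c : ℕ) {s : Finset V}
    (hs : s ∈ Δ) (hc : s.card = c + 1) :
    bdry K hΔ c (faceChain K Δ (c + 1) s) =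
      ∑ v ∈ s, vertexSign K v s • faceChain K Δ c (s.erase v) := by
  rw [faceChain_of_mem ⟨hs, hc⟩, bdry, Finsupp.lsum_single, LinearMap.toSpanSingleton_apply,
    one_smul, faceBdry, ← Finset.sum_attach s]
  refine Finset.sum_congr rfl fun v _ => ?_
  rw [faceChain_of_mem]
  rfl

theorem cone_faceChain (Δ : Set (Finset V)) (v : V) (n : ℕ) {u : Finset V}
    (hu : u ∈ link Δ {v}) :
    cone K Δ v n (faceChain K (link Δ {v}) n u) =
      vertexSign K v u • faceChain K Δ (n + 1) (insert v u) := by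
  obtain ⟨hv, hvu⟩ := mem_link_singleton.mp hu
  by_cases hc : u.card = n
  · rw [faceChain_of_mem ⟨hu, hc⟩, cone, Finsupp.lsum_single, LinearMap.toSpanSingleton_apply,
      one_smul, faceChain_of_mem ⟨hvu, by rw [Finset.card_insert_of_notMem hv, hc]⟩]
  · rw [faceChain_of_card_ne hc,
      faceChain_of_card_ne (by rw [Finset.card_insert_of_notMem hv]; omega), map_zero, smul_zero]

theorem contr_faceChain_of_mem (Δ : Set (Finset V)) {v : V} (n : ℕ) {s : Finset V}
    (hs : s ∈ Δ) (hv : v ∈ s) :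
    contr K Δ v n (faceChain K Δ (n + 1) s) =
      vertexSign K v s • faceChain K (link Δ {v}) n (s.erase v) := by
  by_cases hc : s.card = n + 1
  · rw [faceChain_of_mem ⟨hs, hc⟩, contr, Finsupp.lsum_single, LinearMap.toSpanSingleton_apply,
      one_smul, dif_pos hv, faceChain_of_mem ⟨mem_link_singleton.mpr ⟨Finset.notMem_erase _ _,
        by rwa [Finset.insert_erase hv]⟩, by rw [Finset.card_erase_of_mem hv, hc]; rfl⟩]
  · have hc' : (s.erase v).card ≠ n := by
      have := Finset.card_pos.mpr ⟨v, hv⟩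
      rw [Finset.card_erase_of_mem hv]
      omega
    rw [faceChain_of_card_ne hc, faceChain_of_card_ne hc', map_zero, smul_zero]

theorem contr_faceChain_of_notMem (Δ : Set (Finset V)) {v : V} (n : ℕ) {s : Finset V}
    (hs : s ∈ Δ) (hc : s.card = n + 1) (hv : v ∉ s) :
    contr K Δ v n (faceChain K Δ (n + 1) s) = 0 := by
  rw [faceChain_of_mem ⟨hs, hc⟩, contr, Finsupp.lsum_single, LinearMap.toSpanSingleton_apply,
    one_smul, dif_neg hv]

variable {Δ : Set (Finset V)} (v : V)

theorem contr_cone (n : ℕ) (z : Chains K (link Δ {v}) n) : contr K Δ v n (cone K Δ v n z) = z := by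
  refine linearMap_eq_of_faceChain (f := (contr K Δ v n).comp (cone K Δ v n)) (g := .id)
    (fun u hu _ => ?_) z
  have hv : v ∉ u := (mem_link_singleton.mp hu).1
  rw [LinearMap.comp_apply, LinearMap.id_apply, cone_faceChain Δ v n hu, map_smul,
    contr_faceChain_of_mem Δ n (mem_link_singleton.mp hu).2 (Finset.mem_insert_self v u),
    Finset.erase_insert hv, smul_smul, vertexSign_insert_self, vertexSign_mul_self, one_smul]

theorem cone_contr_add_incl_proj (n : ℕ) (z : Chains K Δ (n + 1)) :
    cone K Δ v n (contr K Δ v n z) + incl K (del_subset Δ v) (n + 1) (proj K Δ v (n + 1) z) =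
      z := by
  refine linearMap_eq_of_faceChain
    (f := (cone K Δ v n).comp (contr K Δ v n)
      + (incl K (del_subset Δ v) (n + 1)).comp (proj K Δ v (n + 1))) (g := .id)
    (fun s hs hc => ?_) z
  rw [LinearMap.add_apply, LinearMap.comp_apply, LinearMap.comp_apply, LinearMap.id_apply]
  by_cases hv : v ∈ s
  · rw [proj_faceChain_of_mem Δ (n + 1) hs hc hv, map_zero, add_zero,
      contr_faceChain_of_mem Δ n hs hv, map_smul,
      cone_faceChain Δ v n (mem_link_singleton.mpr ⟨Finset.notMem_erase _ _,
        by rwa [Finset.insert_erase hv]⟩),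
      Finset.insert_erase hv, smul_smul, vertexSign_erase_self, vertexSign_mul_self, one_smul]
  · rw [contr_faceChain_of_notMem Δ n hs hc hv, map_zero, zero_add,
      proj_faceChain_of_notMem Δ (n + 1) hs hv,
      incl_faceChain (del_subset Δ v) (n + 1) (show s ∈ del Δ v from ⟨hs, hv⟩)]

theorem contr_incl {Δ' : Set (Finset V)} (h : Δ' ⊆ Δ) (hv : ∀ s ∈ Δ', v ∉ s) (n : ℕ)
    (z : Chains K Δ' (n + 1)) : contr K Δ v n (incl K h (n + 1) z) = 0 := by
  refine linearMap_eq_of_faceChain (f := (contr K Δ v n).comp (incl K h (n + 1))) (g := 0)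
    (fun s hs hc => ?_) z
  rw [LinearMap.comp_apply, LinearMap.zero_apply, incl_faceChain h (n + 1) hs,
    contr_faceChain_of_notMem Δ n (h hs) hc (hv s hs)]

theorem incl_bdry {Δ₁ Δ₂ : Set (Finset V)} (hΔ₁ : IsDown Δ₁) (hΔ₂ : IsDown Δ₂)
    (h : Δ₁ ⊆ Δ₂) (n : ℕ) (z : Chains K Δ₁ (n + 1)) :
    incl K h n (bdry K hΔ₁ n z) = bdry K hΔ₂ n (incl K h (n + 1) z) := by
  refine linearMap_eq_of_faceChain (f := (incl K h n).comp (bdry K hΔ₁ n))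
    (g := (bdry K hΔ₂ n).comp (incl K h (n + 1))) (fun s hs hc => ?_) z
  rw [LinearMap.comp_apply, LinearMap.comp_apply, bdry_faceChain hΔ₁ n hs hc,
    incl_faceChain h (n + 1) hs, bdry_faceChain hΔ₂ n (h hs) hc, map_sum]
  refine Finset.sum_congr rfl fun w _ => ?_
  rw [map_smul, incl_faceChain h n (hΔ₁ _ hs _ (Finset.erase_subset _ _))]

variable (hΔ : IsDown Δ)

theorem bdry_cone_zero (z : Chains K (link Δ {v}) 0) :
    bdry K hΔ 0 (cone K Δ v 0 z) = incl K (link_singleton_subset hΔ v) 0 z := by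
  refine linearMap_eq_of_faceChain (f := (bdry K hΔ 0).comp (cone K Δ v 0))
    (g := incl K (link_singleton_subset hΔ v) 0) (fun u hu hc => ?_) z
  obtain rfl := Finset.card_eq_zero.mp hc
  rw [LinearMap.comp_apply, cone_faceChain Δ v 0 hu, map_smul,
    bdry_faceChain hΔ 0 (mem_link_singleton.mp hu).2 rfl, incl_faceChain _ 0 hu]
  simp [vertexSign, Finset.filter_singleton]

theorem bdry_cone_succ (m : ℕ) (z : Chains K (link Δ {v}) (m + 1)) :
    bdry K hΔ (m + 1) (cone K Δ v (m + 1) z) =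
      incl K (link_singleton_subset hΔ v) (m + 1) z -
        cone K Δ v m (bdry K (link_down hΔ {v}) m z) := by
  refine linearMap_eq_of_faceChain (f := (bdry K hΔ (m + 1)).comp (cone K Δ v (m + 1)))
    (g := incl K (link_singleton_subset hΔ v) (m + 1)
      - (cone K Δ v m).comp (bdry K (link_down hΔ {v}) m)) (fun u hu hc => ?_) z
  obtain ⟨hv, hvu⟩ := mem_link_singleton.mp hu
  -- The codimension-one faces of `insert v u` are `u` and the `insert v (u.erase w)` for `w ∈ u`.
  rw [LinearMap.comp_apply, LinearMap.sub_apply, LinearMap.comp_apply,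
    cone_faceChain Δ v (m + 1) hu, map_smul,
    bdry_faceChain hΔ (m + 1) hvu (by rw [Finset.card_insert_of_notMem hv, hc]),
    Finset.sum_insert hv, Finset.erase_insert hv, incl_faceChain _ (m + 1) hu,
    bdry_faceChain (link_down hΔ {v}) m hu hc, map_sum, smul_add, smul_smul,
    vertexSign_insert_self, vertexSign_mul_self, one_smul, Finset.smul_sum, sub_eq_add_neg,
    ← Finset.sum_neg_distrib]
  congr 1
  refine Finset.sum_congr rfl fun w hw => ?_
  rw [map_smul, cone_faceChain Δ v m (link_down hΔ {v} _ hu _ (Finset.erase_subset _ _)),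
    Finset.erase_insert_of_ne (show v ≠ w from fun h => hv (h ▸ hw)), smul_smul, smul_smul,
    ← neg_smul, vertexSign_mul_vertexSign_insert K hv hw]

end Cone

section Vanishing

variable [LinearOrder V] {K : Type*} [Field K]

variable (K) in
def Vanishes {Δ : Set (Finset V)} (hΔ : IsDown Δ) (c : ℕ) : Prop :=
  cycles K hΔ c ≤ LinearMap.range (bdry K hΔ c)

theorem subsingleton_RH_iff {Δ : Set (Finset V)} (hΔ : IsDown Δ) (c : ℕ) :
    Subsingleton (RH K hΔ c) ↔ Vanishes K hΔ c :=
  Submodule.Quotient.subsingleton_iff.trans Submodule.comap_subtype_eq_top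

theorem nontrivial_RH_iff {Δ : Set (Finset V)} (hΔ : IsDown Δ) (c : ℕ) :
    Nontrivial (RH K hΔ c) ↔ ¬ Vanishes K hΔ c := by
  rw [← not_subsingleton_iff_nontrivial, subsingleton_RH_iff]

theorem mem_cycles_succ {Δ : Set (Finset V)} {hΔ : IsDown Δ} {c : ℕ} {z : Chains K Δ (c + 1)} :
    z ∈ cycles K hΔ (c + 1) ↔ bdry K hΔ c z = 0 :=
  LinearMap.mem_ker

theorem mem_cycles_zero {Δ : Set (Finset V)} {hΔ : IsDown Δ} (z : Chains K Δ 0) :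
    z ∈ cycles K hΔ 0 :=
  Submodule.mem_top

theorem vanishes_congr {Δ₁ Δ₂ : Set (Finset V)} {hΔ₁ : IsDown Δ₁} {hΔ₂ : IsDown Δ₂}
    (h : Δ₁ = Δ₂) {c : ℕ} (hv : Vanishes K hΔ₁ c) : Vanishes K hΔ₂ c := by
  subst h
  exact hv

theorem vanishes_of_forall_card_ne {Δ : Set (Finset V)} (hΔ : IsDown Δ) {c : ℕ}
    (h : ∀ s ∈ Δ, s.card ≠ c) : Vanishes K hΔ c := fun z _ => by
  obtain rfl : z = 0 := Finsupp.ext fun s => (h s.1 s.2.1 s.2.2).elim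
  exact zero_mem _

theorem vanishes_link_of_notMem {Δ : Set (Finset V)} (hΔ : IsDown Δ) {σ : Finset V}
    (hσ : σ ∉ Δ) (c : ℕ) : Vanishes K (link_down hΔ σ) c :=
  vanishes_of_forall_card_ne _ fun _ hs _ => hσ (hΔ _ hs.2 _ Finset.subset_union_right)

end Vanishing

section MayerVietoris

variable [LinearOrder V] {K : Type*} [Field K] {Δ : Set (Finset V)} (hΔ : IsDown Δ) (v : V)

theorem contr_bdry (m : ℕ) (w : Chains K Δ (m + 2)) :
    contr K Δ v m (bdry K hΔ (m + 1) w) = -bdry K (link_down hΔ {v}) m (contr K Δ v (m + 1) w) := by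
  conv_lhs => rw [← cone_contr_add_incl_proj v (m + 1) w, map_add]
  rw [bdry_cone_succ v hΔ, ← incl_bdry (del_down hΔ v) hΔ, map_add, map_sub,
    contr_incl v _ (fun s hs => (mem_link_singleton.mp hs).1), contr_cone,
    contr_incl v _ (fun s hs => hs.2)]
  abel

theorem contr_mem_cycles {c : ℕ} {z : Chains K Δ (c + 1)} (hz : z ∈ cycles K hΔ (c + 1)) :
    contr K Δ v c z ∈ cycles K (link_down hΔ {v}) c := by
  cases c with
  | zero => exact mem_cycles_zero _
  | succ m =>
    rw [mem_cycles_succ, ← neg_eq_zero, ← contr_bdry hΔ, mem_cycles_succ.mp hz, map_zero]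

theorem bdry_eq_incl_of_contr_mem_cycles (n : ℕ) (w : Chains K Δ (n + 1))
    (hw : contr K Δ v n w ∈ cycles K (link_down hΔ {v}) n) :
    bdry K hΔ n w = incl K (del_subset Δ v) n
      (incl K (link_subset_del hΔ v) n (contr K Δ v n w) +
        bdry K (del_down hΔ v) n (proj K Δ v (n + 1) w)) := by
  conv_lhs => rw [← cone_contr_add_incl_proj v n w]
  rw [map_add, map_add, incl_incl, incl_bdry (del_down hΔ v) hΔ]
  congr 1
  cases n with
  | zero => exact bdry_cone_zero v hΔ _
  | succ m => rw [bdry_cone_succ v hΔ, mem_cycles_succ.mp hw, map_zero, sub_zero]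

theorem vanishes_succ_of_vanishes_link_of_vanishes_del {c : ℕ}
    (hlink : Vanishes K (link_down hΔ {v}) c) (hdel : Vanishes K (del_down hΔ v) (c + 1)) :
    Vanishes K hΔ (c + 1) := by
  intro z hz
  obtain ⟨y, hy⟩ := hlink (contr_mem_cycles hΔ v hz)
  -- `z + ∂(v * y)` no longer involves `v`: it is the image of the cycle `z'` of the deletion.
  set z' := proj K Δ v (c + 1) z + incl K (link_subset_del hΔ v) (c + 1) y
  have hz' : z' ∈ cycles K (del_down hΔ v) (c + 1) := by
    have hdecomp := bdry_eq_incl_of_contr_mem_cycles hΔ v c z (contr_mem_cycles hΔ v hz)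
    rw [mem_cycles_succ.mp hz, eq_comm, ← map_zero (incl K (del_subset Δ v) c)] at hdecomp
    rw [mem_cycles_succ, map_add, ← incl_bdry (link_down hΔ {v}) (del_down hΔ v), hy, add_comm]
    exact incl_injective _ _ hdecomp
  obtain ⟨w, hw⟩ := hdel hz'
  refine ⟨incl K (del_subset Δ v) (c + 2) w - cone K Δ v (c + 1) y, ?_⟩
  rw [map_sub, ← incl_bdry (del_down hΔ v) hΔ, hw, bdry_cone_succ v hΔ, hy, map_add, incl_incl]
  conv_rhs => rw [← cone_contr_add_incl_proj v c z]
  abel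

theorem vanishes_del_of_vanishes_link_of_vanishes {n : ℕ}
    (hlink : Vanishes K (link_down hΔ {v}) n) (hΔn : Vanishes K hΔ n) :
    Vanishes K (del_down hΔ v) n := by
  intro z hz
  have hz' : incl K (del_subset Δ v) n z ∈ cycles K hΔ n := by
    cases n with
    | zero => exact mem_cycles_zero _
    | succ m => rw [mem_cycles_succ, ← incl_bdry (del_down hΔ v), mem_cycles_succ.mp hz, map_zero]
  obtain ⟨w, hw⟩ := hΔn hz'
  have hcw : contr K Δ v n w ∈ cycles K (link_down hΔ {v}) n := by
    cases n with
    | zero => exact mem_cycles_zero _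
    | succ m =>
      rw [mem_cycles_succ, ← neg_eq_zero, ← contr_bdry hΔ, hw, contr_incl v _ (fun s hs => hs.2)]
  obtain ⟨u, hu⟩ := hlink hcw
  refine ⟨incl K (link_subset_del hΔ v) (n + 1) u + proj K Δ v (n + 1) w, ?_⟩
  rw [map_add, ← incl_bdry (link_down hΔ {v}) (del_down hΔ v), hu]
  refine incl_injective (del_subset Δ v) n ?_
  rw [← bdry_eq_incl_of_contr_mem_cycles hΔ v n w hcw, hw]

end MayerVietoris

section DescendingLinks

variable [LinearOrder V] {K : Type*} [Field K]

theorem vanishes_link_of_forall {Δ : Set (Finset V)} (hΔ : IsDown Δ) {c : ℕ}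
    (hlinks : ∀ ρ ∈ Δ, ρ.Nonempty → Vanishes K (link_down hΔ ρ) c)
    {σ : Finset V} (hσ : σ.Nonempty) : Vanishes K (link_down hΔ σ) c := by
  by_cases hσΔ : σ ∈ Δ
  · exact hlinks σ hσΔ hσ
  · exact vanishes_link_of_notMem hΔ hσΔ c

theorem vanishes_succ_of_forall_vanishes_link (c : ℕ) (S : Finset V) {Δ : Set (Finset V)}
    (hΔ : IsDown Δ) (hS : ∀ s ∈ Δ, s ⊆ S)
    (hlinks : ∀ ρ ∈ Δ, ρ.Nonempty → Vanishes K (link_down hΔ ρ) c) :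
    Vanishes K hΔ (c + 1) := by
  induction S using Finset.induction_on generalizing Δ with
  | empty =>
    refine vanishes_of_forall_card_ne hΔ fun s hs hc => ?_
    rw [Finset.subset_empty.mp (hS s hs), Finset.card_empty] at hc
    exact Nat.zero_ne_add_one c hc
  | insert v S _ ih =>
    refine vanishes_succ_of_vanishes_link_of_vanishes_del hΔ v
      (vanishes_link_of_forall hΔ hlinks (Finset.singleton_nonempty v)) (ih (del_down hΔ v) ?_ ?_)
    · rintro s ⟨hs, hvs⟩ x hx
      exact (Finset.mem_insert.mp (hS s hs hx)).resolve_left fun h => hvs (h ▸ hx)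
    · rintro ρ ⟨hρ, hvρ⟩ hne
      refine vanishes_congr (link_del Δ hvρ).symm
        (vanishes_del_of_vanishes_link_of_vanishes (link_down hΔ ρ) v ?_ (hlinks ρ hρ hne))
      have hdisj : Disjoint {v} ρ := Finset.disjoint_singleton_left.mpr hvρ
      exact vanishes_congr (link_link Δ hdisj).symm (vanishes_link_of_forall hΔ hlinks
        ((Finset.singleton_nonempty v).mono Finset.subset_union_left))

variable [Fintype V]

/-- The descending-links lemma. -/
theorem exists_ssuperset_nontrivial_RH_link {Δ : Set (Finset V)} (hΔ : IsDown Δ) {σ : Finset V}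
    {c : ℕ} (h : Nontrivial (RH K (link_down hΔ σ) (c + 1))) :
    ∃ τ ∈ Δ, σ ⊂ τ ∧ Nontrivial (RH K (link_down hΔ τ) c) := by
  by_contra! hτ
  refine (nontrivial_RH_iff _ _).mp h
    (vanishes_succ_of_forall_vanishes_link c Finset.univ _ (fun _ _ => Finset.subset_univ _) ?_)
  rintro ρ ⟨hρσ, hρ⟩ hne
  have hσρ : σ ⊂ ρ ∪ σ := Finset.ssubset_iff_of_subset Finset.subset_union_right |>.mpr
    (hne.imp fun x hx => ⟨Finset.mem_union_left _ hx, Finset.disjoint_left.mp hρσ hx⟩)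
  exact vanishes_congr (link_link Δ hρσ).symm
    ((subsingleton_RH_iff _ _).mp (hτ _ hρ hσρ))

theorem exists_card_add_le_nontrivial_RH_link {Δ : Set (Finset V)} (hΔ : IsDown Δ) (c k : ℕ)
    {σ : Finset V} (hσ : σ ∈ Δ) (h : Nontrivial (RH K (link_down hΔ σ) (c + k))) :
    ∃ τ ∈ Δ, σ.card + k ≤ τ.card ∧ Nontrivial (RH K (link_down hΔ τ) c) := by
  induction k generalizing σ with
  | zero => exact ⟨σ, hσ, le_rfl, h⟩
  | succ k ih =>
    obtain ⟨ρ, hρ, hσρ, hρc⟩ := exists_ssuperset_nontrivial_RH_link hΔ h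
    obtain ⟨τ, hτ, hcard, hτc⟩ := ih hρ hρc
    exact ⟨τ, hτ, by have := Finset.card_lt_card hσρ; omega, hτc⟩

end DescendingLinks

end

end SRPure

open SRPure in
/-- In a PR complex over `K`, every link has at most one nontrivial
reduced homology group. -/
theorem link_homology_unique_of_isPR
    {V : Type*} [LinearOrder V] [Fintype V] (K : Type*) [Field K]
    (Δ : Set (Finset V)) (hΔ : IsDown Δ) (hPR : IsPR K hΔ) :
    ∀ σ ∈ Δ, ∀ c₁ c₂ : ℕ,
      Nontrivial (RH K (link_down hΔ σ) c₁) →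
      Nontrivial (RH K (link_down hΔ σ) c₂) → c₁ = c₂ := by
  intro σ hσ c₁ c₂ h₁ h₂
  wlog hle : c₁ ≤ c₂ generalizing c₁ c₂
  · exact (this c₂ c₁ h₂ h₁ (le_of_not_ge hle)).symm
  obtain ⟨k, rfl⟩ := Nat.exists_eq_add_of_le hle
  obtain ⟨τ, hτ, hcard, hτc⟩ := exists_card_add_le_nontrivial_RH_link hΔ c₁ k hσ h₂
  have := hPR σ hσ τ hτ c₁ h₁ hτc
  omega
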